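/- arXiv:2504.03316 — 2 statements merged into one kernel-verified Lean document; each statement's English description precedes it below -/
import Mathlib

section
/- Let (M^n,g,f) be a gradient Ricci soliton with scalar curvature R ≥ (n−1)λ, and Σ a compact two-sided stable minimal hypersurface in M. Then Σ is totally geodesic (A ≡ 0), R = (n−1)λ along Σ, and Δf = λ along Σ. -/
open MeasureTheory

/- STATEMENT 6: In a gradient Ricci soliton with R ≥ (n−1)λ, a compact
two-sided stable minimal hypersurface Σ is totally geodesic (|A|² ≡ 0),
R = (n−1)λ along Σ, and Δf = λ along Σ.  Σ is modeled as a compact topological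
measure space with a finite measure positive on open sets; smooth test
functions as `Smooth` (containing the constant 1, whose gradient vanishes).
Hypotheses encode stability, the soliton identities, H = 0, |A|² ≥ 0 and the
scalar curvature lower bound. -/
theorem stable_minimal_totally_geodesic {S : Type*} [MeasurableSpace S]
    [TopologicalSpace S] [BorelSpace S] [CompactSpace S]
    (μ : Measure S) [IsFiniteMeasure μ] [μ.IsOpenPosMeasure]
    (n : ℕ) (lam : ℝ)
    (Smooth : Set (S → ℝ)) (gradSq : (S → ℝ) → S → ℝ)
    (Ricνν Asq Hessνν Δf ΔSf R : S → ℝ)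
    (hRcont : Continuous R) (hAcont : Continuous Asq) (hΔScont : Continuous ΔSf)
    (hstab : ∀ φ ∈ Smooth,
      0 ≤ ∫ x, (gradSq φ x - (Ricνν x + Asq x) * (φ x) ^ 2) ∂μ)
    (hone : (fun _ => (1 : ℝ)) ∈ Smooth)
    (hgradone : ∀ x, gradSq (fun _ => (1 : ℝ)) x = 0)
    (hsol : ∀ x, Ricνν x = lam - Hessνν x)
    (hhess : ∀ x, Hessνν x = Δf x - ΔSf x)
    (hdiv : ∫ x, ΔSf x ∂μ = 0)
    (htrace : ∀ x, R x + Δf x = n * lam)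
    (hApos : ∀ x, 0 ≤ Asq x)
    (hRlb : ∀ x, ((n : ℝ) - 1) * lam ≤ R x) :
    (∀ x, Asq x = 0) ∧ (∀ x, R x = ((n : ℝ) - 1) * lam) ∧ (∀ x, Δf x = lam) := by
  -- Integrability of continuous functions on a compact space with finite measure
  have hint : ∀ f : S → ℝ, Continuous f → Integrable f μ := by
    intro f hf
    obtain ⟨C, hC⟩ := (isCompact_univ.image hf).isBounded.exists_norm_le
    refine ⟨hf.aestronglyMeasurable, HasFiniteIntegral.of_bounded (C := C) ?_⟩
    filter_upwards with x
    exact hC _ ⟨x, trivial, rfl⟩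
  set g : S → ℝ := fun x => R x - ((n : ℝ) - 1) * lam + Asq x with hg
  have hgcont : Continuous g := by
    have : Continuous fun x => R x - ((n : ℝ) - 1) * lam :=
      hRcont.sub continuous_const
    exact this.add hAcont
  have hgpos : ∀ x, 0 ≤ g x := fun x => by
    have := hRlb x; have := hApos x; simp only [hg]; linarith
  have hgint : Integrable g μ := hint g hgcont
  -- Stability with φ = 1
  have h1 := hstab _ hone
  have heq : ∀ x, gradSq (fun _ => (1 : ℝ)) x -
      (Ricνν x + Asq x) * ((1 : ℝ)) ^ 2 = -(g x + ΔSf x) := by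
    intro x
    have h1 := hgradone x
    have h2 := hsol x
    have h3 := hhess x
    have h4 := htrace x
    simp only [hg]
    rw [h1, h2, h3]
    ring_nf
    linarith
  rw [integral_congr_ae (Filter.Eventually.of_forall heq)] at h1
  have hsum : Integrable (fun x => g x + ΔSf x) μ :=
    hgint.add (hint _ hΔScont)
  rw [integral_neg, integral_add hgint (hint _ hΔScont), hdiv] at h1
  have hzero : ∫ x, g x ∂μ = 0 := by
    have hge : 0 ≤ ∫ x, g x ∂μ :=
      integral_nonneg hgpos
    linarith
  have hae : g =ᵐ[μ] 0 :=
    (integral_eq_zero_iff_of_nonneg hgpos hgint).mp hzero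
  have hgz : g = 0 := (hgcont.ae_eq_iff_eq μ continuous_const).mp hae
  have hgz' : ∀ x, g x = 0 := fun x => congrFun hgz x
  refine ⟨fun x => ?_, fun x => ?_, fun x => ?_⟩
  · have h := hgz' x; have hr := hRlb x; have ha := hApos x
    simp only [hg] at h; linarith
  · have h := hgz' x; have hr := hRlb x; have ha := hApos x
    simp only [hg] at h; linarith
  · have hA : Asq x = 0 := by
      have h := hgz' x; have hr := hRlb x; have ha := hApos x
      simp only [hg] at h; linarith
    have hR : R x = ((n : ℝ) - 1) * lam := by
      have h := hgz' x; simp only [hg] at h; linarith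
    have := htrace x
    nlinarith [htrace x]
end

section
/- Let (M^n,g,f) be a gradient Ricci soliton with R ≥ (n−1)λ, and let Σ̂ be a compact two-sided hypersurface with mean curvature Ĥ = h = δe^{−f} (δ > 0) satisfying the μ-bubble stability inequality ∫_{Σ̂}[|∇φ|² − (Ric(ν̂,ν̂)+|Â|²+⟨∇h,ν̂⟩)φ²] ≥ 0. Then taking φ ≡ 1 and using the soliton identities yields ∫_{Σ̂} ((n−1)λ − R − |Â|²) ≥ 0, so Â ≡ 0; but a totally geodesic hypersurface has mean curvature 0 ≠ h > 0, a contradiction. Hence no such stable μ-bubble with h = δe^{−f} > 0 exists. -/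
open MeasureTheory

/- STATEMENT 12: In a shrinking gradient Ricci soliton with R ≥ (n−1)λ
(normalized so R + |∇f|² = 2λf), there is no compact two-sided stable
μ-bubble Σ̂ with prescribed mean curvature Ĥ = h = δe^{−f} > 0: the stability
inequality with φ ≡ 1 and the soliton identities force Â ≡ 0, but a totally
geodesic hypersurface has mean curvature 0 ≠ h > 0.  Σ̂ is modeled as a
nonempty compact topological measure space; `νgradf` = ⟨∇f,ν̂⟩, `dhν` = ⟨∇h,ν̂⟩,
`fS` = f restricted to Σ̂, and `ΔSf` = Δ_{Σ̂}f. -/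
theorem no_stable_mu_bubble {B : Type*} [MeasurableSpace B]
    [TopologicalSpace B] [BorelSpace B] [CompactSpace B] [Nonempty B]
    (μ : Measure B) [IsFiniteMeasure μ] [μ.IsOpenPosMeasure]
    (n : ℕ) (lam δ : ℝ) (hlam : 0 < lam) (hδ : 0 < δ)
    (Smooth : Set (B → ℝ)) (gradSq : (B → ℝ) → B → ℝ)
    (Ricνν Asq Hessνν Δf ΔSf R H h fS νgradf dhν : B → ℝ)
    (hRcont : Continuous R) (hAcont : Continuous Asq) (hΔScont : Continuous ΔSf)
    (hh : ∀ x, h x = δ * Real.exp (-fS x))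
    (hH : ∀ x, H x = h x)
    (hstab : ∀ φ ∈ Smooth,
      0 ≤ ∫ x, (gradSq φ x - (Ricνν x + Asq x + dhν x) * (φ x) ^ 2) ∂μ)
    (hone : (fun _ => (1 : ℝ)) ∈ Smooth)
    (hgradone : ∀ x, gradSq (fun _ => (1 : ℝ)) x = 0)
    (hsol : ∀ x, Ricνν x = lam - Hessνν x)
    (hhess : ∀ x, Hessνν x = Δf x - ΔSf x - H x * νgradf x)
    (htrace : ∀ x, R x + Δf x = n * lam)
    (hdh : ∀ x, dhν x = -(h x) * νgradf x)
    (hdiv : ∫ x, ΔSf x ∂μ = 0)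
    (hApos : ∀ x, 0 ≤ Asq x)
    (hAtrace : ∀ x, Asq x = 0 → H x = 0)
    (hRlb : ∀ x, ((n : ℝ) - 1) * lam ≤ R x) :
    False := by

  classical
  set g : B → ℝ := fun x => ((n : ℝ) - 1) * lam - R x - Asq x with hg
  have hgcont : Continuous g := by
    continuity
  have hgint : Integrable g μ :=
    hgcont.integrable_of_hasCompactSupport (HasCompactSupport.of_compactSpace _)
  have hΔSint : Integrable ΔSf μ :=
    hΔScont.integrable_of_hasCompactSupport (HasCompactSupport.of_compactSpace _)
  -- rewrite the stability integrand at φ = 1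
  have key : ∀ x, gradSq (fun _ => (1 : ℝ)) x
      - (Ricνν x + Asq x + dhν x) * ((1 : ℝ)) ^ 2 = g x - ΔSf x := by
    intro x
    have h1 := hsol x
    have h2 := hhess x
    have h3 := htrace x
    have h4 := hdh x
    have h5 := hH x
    have h6 := hgradone x
    simp only [hg, h6, one_pow, mul_one]
    have hΔ : Δf x = n * lam - R x := by linarith
    rw [h1, h2, h4, h5, hΔ]
    ring
  have hst := hstab _ hone
  rw [integral_congr_ae (Filter.Eventually.of_forall key)] at hst
  rw [integral_sub hgint hΔSint, hdiv, sub_zero] at hst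
  -- g ≤ 0 pointwise and ∫ g ≥ 0 ⇒ g ≡ 0
  have hgle : ∀ x, g x ≤ 0 := fun x => by
    have := hRlb x; have := hApos x; simp only [hg]; linarith
  have hneg : ∫ x, (-g) x ∂μ = 0 := by
    have h1 : ∫ x, (-g) x ∂μ ≤ 0 := by
      rw [integral_neg']; linarith
    have h2 : 0 ≤ ∫ x, (-g) x ∂μ :=
      integral_nonneg fun x => by simpa using hgle x
    linarith
  have hae : (fun x => (-g) x) =ᵐ[μ] 0 :=
    (integral_eq_zero_iff_of_nonneg (fun x => by simpa using hgle x) hgint.neg).mp hneg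
  have hzero : (fun x => (-g) x) = 0 := (hgcont.neg.ae_eq_iff_eq μ continuous_const).mp hae
  obtain ⟨x⟩ := ‹Nonempty B›
  have hgx : g x = 0 := by
    have := congrFun hzero x; simpa [neg_eq_zero] using this
  have hAx : Asq x = 0 := by
    have := hRlb x; have := hApos x; simp only [hg] at hgx; linarith
  have hHx : H x = 0 := hAtrace x hAx
  have : H x > 0 := by rw [hH x, hh x]; positivity
  linarith
end
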